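/- Let (Λ,d) be a k-graph satisfying the standing assumption (★) and let x ∈ Λ^Δ. Then the map (y,w) ↦ [y,w] restricted to E_x × F_x is a homeomorphism of E_x × F_x (with the product of the subspace topologies) onto the cylinder set Z(x(0),0), with inverse given by z ↦ ([z,x],[x,z]). -/

import Mathlib

open scoped Classical
open TopologicalSpace MeasureTheory

/-- A `k`-graph: a countable small category with a degree functor to `ℕ^k`
satisfying the unique factorisation property.  Objects are identified with
the degree-zero morphisms. -/
structure KGraph (k : ℕ) where
  Mor : Type
  countable : Countable Mor
  src : Mor → Mor
  rng : Mor → Mor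
  deg : Mor → Fin k → ℕ
  comp : (lam mu : Mor) → src lam = rng mu → Mor
  deg_src : ∀ lam, deg (src lam) = 0
  deg_rng : ∀ lam, deg (rng lam) = 0
  src_obj : ∀ v, deg v = 0 → src v = v
  rng_obj : ∀ v, deg v = 0 → rng v = v
  src_comp : ∀ lam mu h, src (comp lam mu h) = src mu
  rng_comp : ∀ lam mu h, rng (comp lam mu h) = rng lam
  deg_comp : ∀ lam mu h, deg (comp lam mu h) = deg lam + deg mu
  id_comp : ∀ lam (h : src (rng lam) = rng lam), comp (rng lam) lam h = lam
  comp_id : ∀ lam (h : src lam = rng (src lam)), comp lam (src lam) h = lam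
  assoc : ∀ l m n (h1 : src l = rng m) (h2 : src m = rng n)
      (h3 : src (comp l m h1) = rng n) (h4 : src l = rng (comp m n h2)),
      comp (comp l m h1) n h3 = comp l (comp m n h2) h4
  factor : ∀ lam (n1 n2 : Fin k → ℕ), deg lam = n1 + n2 →
      ∃! p : Mor × Mor, deg p.1 = n1 ∧ deg p.2 = n2 ∧
        ∃ h : src p.1 = rng p.2, comp p.1 p.2 h = lam

namespace KGraph

variable {k : ℕ}

/-- The vertices (objects) of a `k`-graph are the degree-zero morphisms. -/
def IsVertex (Λ : KGraph k) (v : Λ.Mor) : Prop := Λ.deg v = 0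

/-- Standing assumption (★): for each `p ∈ ℕ^k` the restrictions of `r` and `s`
to `Λ^p` are surjective (onto the vertices) and finite-to-one. -/
def Star (Λ : KGraph k) : Prop :=
  ∀ p : Fin k → ℕ,
    (∀ v, Λ.IsVertex v →
      (∃ lam, Λ.deg lam = p ∧ Λ.rng lam = v) ∧
      (∃ lam, Λ.deg lam = p ∧ Λ.src lam = v)) ∧
    (∀ v, Λ.IsVertex v →
      {lam | Λ.deg lam = p ∧ Λ.rng lam = v}.Finite ∧
      {lam | Λ.deg lam = p ∧ Λ.src lam = v}.Finite)

/-- Irreducibility (strong connectedness) of a `k`-graph. -/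
def Irreducible (Λ : KGraph k) : Prop :=
  ∀ u v, Λ.IsVertex u → Λ.IsVertex v →
    ∃ lam, Λ.deg lam ≠ 0 ∧ Λ.rng lam = u ∧ Λ.src lam = v

/-- Primitivity of a `k`-graph. -/
def Primitive (Λ : KGraph k) : Prop :=
  ∃ p : Fin k → ℕ, p ≠ 0 ∧ ∀ u v, Λ.IsVertex u → Λ.IsVertex v →
    ∃ lam, Λ.deg lam = p ∧ Λ.rng lam = u ∧ Λ.src lam = v

/-- The degree of a morphism, viewed in `ℤ^k`. -/
def degZ (Λ : KGraph k) (lam : Λ.Mor) : Fin k → ℤ := fun i => (Λ.deg lam i : ℤ)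

/-- The number of morphisms of degree `p` with range `u` and source `v`. -/
noncomputable def count (Λ : KGraph k) (p : Fin k → ℕ) (u v : Λ.Mor) : ℕ :=
  Nat.card {lam : Λ.Mor // Λ.deg lam = p ∧ Λ.rng lam = u ∧ Λ.src lam = v}

end KGraph

/-- A two-sided infinite path in a `k`-graph: a degree-preserving functor from
the `k`-graph `Δ = {(m,n) ∈ ℤ^k × ℤ^k : m ≤ n}` to `Λ`. -/
structure TwoSidedPath {k : ℕ} (Λ : KGraph k) where
  toFun : ∀ m n : Fin k → ℤ, m ≤ n → Λ.Mor
  deg_eq : ∀ m n (h : m ≤ n) (i : Fin k), (Λ.deg (toFun m n h) i : ℤ) = n i - m i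
  src_eq : ∀ m n (h : m ≤ n), Λ.src (toFun m n h) = toFun n n le_rfl
  rng_eq : ∀ m n (h : m ≤ n), Λ.rng (toFun m n h) = toFun m m le_rfl
  comp_eq : ∀ l m n (h1 : l ≤ m) (h2 : m ≤ n),
      Λ.comp (toFun l m h1) (toFun m n h2)
        ((src_eq l m h1).trans (rng_eq m n h2).symm) = toFun l n (h1.trans h2)

/-- A one-sided infinite path in a `k`-graph: a degree-preserving functor from
the `k`-graph `Ω = {(m,n) ∈ ℕ^k × ℕ^k : m ≤ n}` to `Λ`. -/
structure OneSidedPath {k : ℕ} (Λ : KGraph k) where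
  toFun : ∀ m n : Fin k → ℕ, m ≤ n → Λ.Mor
  deg_eq : ∀ m n (h : m ≤ n) (i : Fin k), Λ.deg (toFun m n h) i = n i - m i
  src_eq : ∀ m n (h : m ≤ n), Λ.src (toFun m n h) = toFun n n le_rfl
  rng_eq : ∀ m n (h : m ≤ n), Λ.rng (toFun m n h) = toFun m m le_rfl
  comp_eq : ∀ l m n (h1 : l ≤ m) (h2 : m ≤ n),
      Λ.comp (toFun l m h1) (toFun m n h2)
        ((src_eq l m h1).trans (rng_eq m n h2).symm) = toFun l n (h1.trans h2)

namespace TwoSidedPath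

variable {k : ℕ} {Λ : KGraph k}

theorem toFun_congr (x : TwoSidedPath Λ) {m n m' n' : Fin k → ℤ}
    (hm : m = m') (hn : n = n') (h : m ≤ n) (h' : m' ≤ n') :
    x.toFun m n h = x.toFun m' n' h' := by subst hm; subst hn; rfl

/-- The vertex `x(0)` of a two-sided path. -/
def obj0 (x : TwoSidedPath Λ) : Λ.Mor := x.toFun 0 0 le_rfl

end TwoSidedPath

theorem le_add_degZ {k : ℕ} (Λ : KGraph k) (n : Fin k → ℤ) (lam : Λ.Mor) :
    n ≤ n + Λ.degZ lam :=
  Pi.le_def.mpr fun i => by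
    show n i ≤ n i + (Λ.deg lam i : ℤ); omega

/-- The cylinder set `Z(λ, n) = {x ∈ Λ^Δ : x(n, n + d(λ)) = λ}`. -/
def ZCyl {k : ℕ} (Λ : KGraph k) (lam : Λ.Mor) (n : Fin k → ℤ) :
    Set (TwoSidedPath Λ) :=
  {x | x.toFun n (n + Λ.degZ lam) (le_add_degZ Λ n lam) = lam}

/-- The topology on `Λ^Δ` generated by the cylinder sets. -/
instance {k : ℕ} (Λ : KGraph k) : TopologicalSpace (TwoSidedPath Λ) :=
  TopologicalSpace.generateFrom {S | ∃ lam n, S = ZCyl Λ lam n}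

noncomputable instance {k : ℕ} (Λ : KGraph k) : MeasurableSpace (TwoSidedPath Λ) :=
  borel _

/-- The one-sided cylinder set `Z(λ) = {x ∈ Λ^Ω : x(0, d(λ)) = λ}`. -/
def OCyl {k : ℕ} (Λ : KGraph k) (lam : Λ.Mor) : Set (OneSidedPath Λ) :=
  {x | x.toFun 0 (Λ.deg lam) (Pi.le_def.mpr fun _ => Nat.zero_le _) = lam}

/-- The topology on `Λ^Ω` generated by the cylinder sets. -/
instance {k : ℕ} (Λ : KGraph k) : TopologicalSpace (OneSidedPath Λ) :=
  TopologicalSpace.generateFrom {S | ∃ lam, S = OCyl Λ lam}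

/-- The shift `σ^n` on the two-sided path space, for `n ∈ ℤ^k`. -/
def TwoSidedPath.shift {k : ℕ} {Λ : KGraph k} (n : Fin k → ℤ)
    (x : TwoSidedPath Λ) : TwoSidedPath Λ where
  toFun l m h := x.toFun (l + n) (m + n) (add_le_add_left h n)
  deg_eq l m h i := by
    show (Λ.deg (x.toFun (l + n) (m + n) (add_le_add_left h n)) i : ℤ) = m i - l i
    have h' := x.deg_eq (l + n) (m + n) (add_le_add_left h n) i
    simp only [Pi.add_apply] at h'
    omega
  src_eq l m h := x.src_eq (l + n) (m + n) (add_le_add_left h n)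
  rng_eq l m h := x.rng_eq (l + n) (m + n) (add_le_add_left h n)
  comp_eq l m m' h1 h2 :=
    x.comp_eq (l + n) (m + n) (m' + n) (add_le_add_left h1 n) (add_le_add_left h2 n)

/-- The shift `σ^p` on the one-sided path space, for `p ∈ ℕ^k`. -/
def OneSidedPath.shift {k : ℕ} {Λ : KGraph k} (p : Fin k → ℕ)
    (x : OneSidedPath Λ) : OneSidedPath Λ where
  toFun l m h := x.toFun (l + p) (m + p) (add_le_add_left h p)
  deg_eq l m h i := by
    show Λ.deg (x.toFun (l + p) (m + p) (add_le_add_left h p)) i = m i - l i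
    have h' := x.deg_eq (l + p) (m + p) (add_le_add_left h p) i
    simp only [Pi.add_apply] at h'
    omega
  src_eq l m h := x.src_eq (l + p) (m + p) (add_le_add_left h p)
  rng_eq l m h := x.rng_eq (l + p) (m + p) (add_le_add_left h p)
  comp_eq l m m' h1 h2 :=
    x.comp_eq (l + p) (m + p) (m' + p) (add_le_add_left h1 p) (add_le_add_left h2 p)

/-- The vector `(j, …, j) ∈ ℤ^k`, i.e. `j·e` where `e = (1,…,1)`. -/
def jvecZ (k : ℕ) (j : ℕ) : Fin k → ℤ := fun _ => (j : ℤ)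

theorem neg_jvecZ_le (k j : ℕ) : -(jvecZ k j) ≤ jvecZ k j :=
  Pi.le_def.mpr fun _ => by show -((j : ℤ)) ≤ (j : ℤ); omega

/-- Coercion `ℕ^k → ℤ^k`. -/
def coeZ {k : ℕ} (p : Fin k → ℕ) : Fin k → ℤ := fun i => (p i : ℤ)

theorem coeZ_le_coeZ {k : ℕ} {m n : Fin k → ℕ} (h : m ≤ n) : coeZ m ≤ coeZ n :=
  Pi.le_def.mpr fun i => by
    show ((m i : ℤ)) ≤ (n i : ℤ)
    exact_mod_cast Pi.le_def.mp h i

theorem neg_coeZ_le {k : ℕ} (m : Fin k → ℕ) : -(coeZ m) ≤ coeZ m :=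
  Pi.le_def.mpr fun i => by show -((m i : ℤ)) ≤ (m i : ℤ); omega

/-- The quantity `h(x,y) ∈ ℕ∞`:  `0` if `x(0) ≠ y(0)`, and otherwise
`1 + sup { j : x(-je, je) = y(-je, je) }`. -/
noncomputable def hdist {k : ℕ} {Λ : KGraph k} (x y : TwoSidedPath Λ) : ℕ∞ :=
  if x.obj0 = y.obj0 then
    1 + sSup {c : ℕ∞ | ∃ j : ℕ, c = (j : ℕ∞) ∧
        x.toFun (-(jvecZ k j)) (jvecZ k j) (neg_jvecZ_le k j) =
        y.toFun (-(jvecZ k j)) (jvecZ k j) (neg_jvecZ_le k j)}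
  else 0

/-- The metric `ρ(x,y) = r^{h(x,y)}`, with `r^∞ = 0`. -/
noncomputable def rho {k : ℕ} {Λ : KGraph k} (r : ℝ) (x y : TwoSidedPath Λ) : ℝ :=
  if hdist x y = ⊤ then 0 else r ^ (hdist x y).toNat

/-- The local contracting set `E_x`. -/
def Ex {k : ℕ} {Λ : KGraph k} (x : TwoSidedPath Λ) : Set (TwoSidedPath Λ) :=
  {y | ∀ m n (h : m ≤ n), 0 ≤ m → y.toFun m n h = x.toFun m n h}

/-- The local expanding set `F_x`. -/
def Fx {k : ℕ} {Λ : KGraph k} (x : TwoSidedPath Λ) : Set (TwoSidedPath Λ) :=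
  {y | ∀ m n (h : m ≤ n), n ≤ 0 → y.toFun m n h = x.toFun m n h}

/-- The restriction map `π : Λ^Δ → Λ^Ω`. -/
def TwoSidedPath.restrict {k : ℕ} {Λ : KGraph k} (x : TwoSidedPath Λ) :
    OneSidedPath Λ where
  toFun m n h := x.toFun (coeZ m) (coeZ n) (coeZ_le_coeZ h)
  deg_eq m n h i := by
    show Λ.deg (x.toFun (coeZ m) (coeZ n) (coeZ_le_coeZ h)) i = n i - m i
    have h' := x.deg_eq (coeZ m) (coeZ n) (coeZ_le_coeZ h) i
    simp only [coeZ] at h'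
    omega
  src_eq m n h := x.src_eq (coeZ m) (coeZ n) (coeZ_le_coeZ h)
  rng_eq m n h := x.rng_eq (coeZ m) (coeZ n) (coeZ_le_coeZ h)
  comp_eq l m n h1 h2 :=
    x.comp_eq (coeZ l) (coeZ m) (coeZ n) (coeZ_le_coeZ h1) (coeZ_le_coeZ h2)

/-- Stable equivalence: `x ∼ₛ y` iff the two paths eventually agree to the right. -/
def SRel {k : ℕ} {Λ : KGraph k} (x y : TwoSidedPath Λ) : Prop :=
  ∃ m : Fin k → ℤ, ∀ n (h : m ≤ n), x.toFun m n h = y.toFun m n h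

/-- Unstable equivalence: `x ∼ᵤ y` iff the two paths eventually agree to the left. -/
def URel {k : ℕ} {Λ : KGraph k} (x y : TwoSidedPath Λ) : Prop :=
  ∃ n : Fin k → ℤ, ∀ m (h : m ≤ n), x.toFun m n h = y.toFun m n h

/-- Asymptotic equivalence: `x ∼ₐ y` iff `x ∼ₛ y` and `x ∼ᵤ y`. -/
def ARel {k : ℕ} {Λ : KGraph k} (x y : TwoSidedPath Λ) : Prop :=
  ∃ m : Fin k → ℕ, ∀ n : Fin k → ℤ, coeZ m ≤ n →
    (∀ h : coeZ m ≤ n, x.toFun (coeZ m) n h = y.toFun (coeZ m) n h) ∧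
    (∀ h' : -n ≤ -(coeZ m), x.toFun (-n) (-(coeZ m)) h' = y.toFun (-n) (-(coeZ m)) h')

/-- The groupoid `G_{s,m}` of pairs agreeing from `m ∈ ℤ^k` onwards. -/
def Gsm {k : ℕ} (Λ : KGraph k) (m : Fin k → ℤ) :
    Set (TwoSidedPath Λ × TwoSidedPath Λ) :=
  {p | ∀ n (h : m ≤ n), p.1.toFun m n h = p.2.toFun m n h}

theorem TwoSidedPath.self_mem_cyl {k : ℕ} {Λ : KGraph k} (x : TwoSidedPath Λ)
    (m n : Fin k → ℤ) (h : m ≤ n) : x ∈ ZCyl Λ (x.toFun m n h) m := by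
  show x.toFun m (m + Λ.degZ (x.toFun m n h)) _ = x.toFun m n h
  apply x.toFun_congr rfl
  funext i
  show m i + (Λ.deg (x.toFun m n h) i : ℤ) = n i
  have h' := x.deg_eq m n h i
  omega

theorem degZ_obj0 {k : ℕ} {Λ : KGraph k} (x : TwoSidedPath Λ) :
    Λ.degZ x.obj0 = 0 := by
  funext i
  show (Λ.deg (x.toFun 0 0 le_rfl) i : ℤ) = 0
  have h' := x.deg_eq 0 0 le_rfl i
  simp only [Pi.zero_apply] at h'
  omega

theorem mem_vertex_cyl {k : ℕ} {Λ : KGraph k} {x z : TwoSidedPath Λ}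
    (hz : z ∈ ZCyl Λ x.obj0 0) : z.obj0 = x.obj0 := by
  have h0 : (0 : Fin k → ℤ) = 0 + Λ.degZ x.obj0 := by rw [degZ_obj0]; simp
  calc z.obj0 = z.toFun 0 (0 + Λ.degZ x.obj0) (le_add_degZ Λ 0 x.obj0) :=
        z.toFun_congr rfl h0 le_rfl (le_add_degZ Λ 0 x.obj0)
    _ = x.obj0 := hz
/-!
A two-sided path is determined by its two halves at `0`: by unique factorisation, `z(m,n)` is a
factor of `z(m ∧ 0, n ∨ 0) = z(m ∧ 0, 0) z(0, n ∨ 0)`. So any path that agrees with `y` left of `0`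
and with `w` right of `0` is `[y,w]`, which makes `z ↦ ([z,x],[x,z])` inverse to the bracket; and
each segment of `[y,w]` depends on one segment of `y` and one of `w`, which gives continuity.
-/

section Bracket

open Filter Topology

variable {k : ℕ} {Λ : KGraph k}

theorem KGraph.comp_congr {a b a' b' : Λ.Mor} (ea : a = a') (eb : b = b')
    (h : Λ.src a = Λ.rng b) (h' : Λ.src a' = Λ.rng b') :
    Λ.comp a b h = Λ.comp a' b' h' := by
  subst ea eb; rfl

theorem KGraph.eq_of_comp_eq {a b a' b' : Λ.Mor}
    (h : Λ.src a = Λ.rng b) (h' : Λ.src a' = Λ.rng b') (hd : Λ.deg a = Λ.deg a')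
    (he : Λ.comp a b h = Λ.comp a' b' h') : a = a' ∧ b = b' := by
  have hdb : Λ.deg b = Λ.deg b' := by
    have hsum : Λ.deg a + Λ.deg b = Λ.deg a' + Λ.deg b' := by
      rw [← Λ.deg_comp a b h, he, Λ.deg_comp]
    rw [hd] at hsum
    exact add_left_cancel hsum
  obtain ⟨p, -, hunique⟩ := Λ.factor (Λ.comp a b h) (Λ.deg a) (Λ.deg b) (Λ.deg_comp a b h)
  have e : (a, b) = (a', b') :=
    (hunique (a, b) ⟨rfl, rfl, h, rfl⟩).trans (hunique (a', b') ⟨hd.symm, hdb.symm, h', he.symm⟩).symm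
  exact Prod.ext_iff.mp e

namespace TwoSidedPath

theorem ext {x y : TwoSidedPath Λ}
    (h : ∀ m n (hmn : m ≤ n), x.toFun m n hmn = y.toFun m n hmn) : x = y := by
  have ht : x.toFun = y.toFun := by
    funext m n hmn; exact h m n hmn
  cases x; cases y; cases ht; rfl

theorem deg_toFun_eq (x y : TwoSidedPath Λ) {m n : Fin k → ℤ} (h : m ≤ n) :
    Λ.deg (x.toFun m n h) = Λ.deg (y.toFun m n h) := by
  funext i
  have hx := x.deg_eq m n h i
  have hy := y.deg_eq m n h i
  omega

theorem toFun_eq_of_outer {x y : TwoSidedPath Λ} {M m n N : Fin k → ℤ}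
    (h1 : M ≤ m) (h2 : m ≤ n) (h3 : n ≤ N)
    (h : x.toFun M N ((h1.trans h2).trans h3) = y.toFun M N ((h1.trans h2).trans h3)) :
    x.toFun m n h2 = y.toFun m n h2 := by
  have hmN : x.toFun m N (h2.trans h3) = y.toFun m N (h2.trans h3) := by
    have he := (x.comp_eq M m N h1 (h2.trans h3)).trans (h.trans (y.comp_eq M m N h1 (h2.trans h3)).symm)
    exact (KGraph.eq_of_comp_eq _ _ (x.deg_toFun_eq y h1) he).2
  have he := (x.comp_eq m n N h2 h3).trans (hmN.trans (y.comp_eq m n N h2 h3).symm)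
  exact (KGraph.eq_of_comp_eq _ _ (x.deg_toFun_eq y h2) he).1

theorem toFun_eq_of_halves {x y : TwoSidedPath Λ} {m n : Fin k → ℤ} (hmn : m ≤ n)
    (hl : x.toFun (m ⊓ 0) 0 inf_le_right = y.toFun (m ⊓ 0) 0 inf_le_right)
    (hr : x.toFun 0 (n ⊔ 0) le_sup_right = y.toFun 0 (n ⊔ 0) le_sup_right) :
    x.toFun m n hmn = y.toFun m n hmn := by
  refine toFun_eq_of_outer (inf_le_left (b := 0)) hmn (le_sup_left (b := 0)) ?_
  rw [← x.comp_eq (m ⊓ 0) 0 (n ⊔ 0) inf_le_right le_sup_right,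
    ← y.comp_eq (m ⊓ 0) 0 (n ⊔ 0) inf_le_right le_sup_right]
  exact KGraph.comp_congr hl hr _ _

theorem isOpen_setOf_toFun_eq (z : TwoSidedPath Λ) (m n : Fin k → ℤ) (h : m ≤ n) :
    IsOpen {y : TwoSidedPath Λ | y.toFun m n h = z.toFun m n h} := by
  have hn : m + Λ.degZ (z.toFun m n h) = n := by
    funext i
    have := z.deg_eq m n h i
    show m i + (Λ.deg (z.toFun m n h) i : ℤ) = n i
    omega
  have hset : {y : TwoSidedPath Λ | y.toFun m n h = z.toFun m n h}
      = ZCyl Λ (z.toFun m n h) m := by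
    ext y
    exact (congrArg (· = z.toFun m n h) (y.toFun_congr rfl hn.symm h _)).to_iff
  rw [hset]
  exact isOpen_generateFrom_of_mem ⟨_, _, rfl⟩

theorem eventually_toFun_eq (z : TwoSidedPath Λ) (m n : Fin k → ℤ) (h : m ≤ n) :
    ∀ᶠ y in 𝓝 z, y.toFun m n h = z.toFun m n h :=
  (isOpen_setOf_toFun_eq z m n h).mem_nhds rfl

theorem continuous_of_eventually_toFun_eq {X : Type*} [TopologicalSpace X]
    {f : X → TwoSidedPath Λ}
    (hf : ∀ p m n (hmn : m ≤ n), ∀ᶠ q in 𝓝 p, (f q).toFun m n hmn = (f p).toFun m n hmn) :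
    Continuous f := by
  rw [continuous_generateFrom_iff]
  rintro _ ⟨lam, n, rfl⟩
  refine isOpen_iff_mem_nhds.mpr fun p hp => ?_
  filter_upwards [hf p _ _ (le_add_degZ Λ n lam)] with q hq
  exact hq.trans hp

end TwoSidedPath

open TwoSidedPath

theorem Ex_eq_of_mem {x y : TwoSidedPath Λ} (hy : y ∈ Ex x) : Ex y = Ex x := by
  ext z
  exact forall₄_congr fun m n h hm => by rw [hy m n h hm]

theorem Fx_eq_of_mem {x y : TwoSidedPath Λ} (hy : y ∈ Fx x) : Fx y = Fx x := by
  ext z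
  exact forall₄_congr fun m n h hn => by rw [hy m n h hn]

theorem eq_of_mem_Fx_of_mem_Ex {x y : TwoSidedPath Λ} (hF : y ∈ Fx x) (hE : y ∈ Ex x) :
    y = x :=
  TwoSidedPath.ext fun _ _ hmn =>
    toFun_eq_of_halves hmn (hF _ _ _ le_rfl) (hE _ _ _ le_rfl)

theorem continuous_of_mem_Fx_of_mem_Ex {X : Type*} [TopologicalSpace X]
    {f g h : X → TwoSidedPath Λ} (hg : Continuous g) (hh : Continuous h)
    (hf : ∀ p, f p ∈ Fx (g p) ∧ f p ∈ Ex (h p)) : Continuous f := by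
  refine continuous_of_eventually_toFun_eq fun p m n hmn => ?_
  filter_upwards [hg.continuousAt.eventually (eventually_toFun_eq (g p) _ 0 inf_le_right),
    hh.continuousAt.eventually (eventually_toFun_eq (h p) 0 _ le_sup_right)] with q hgq hhq
  refine toFun_eq_of_halves hmn ?_ ?_
  · rw [(hf q).1 _ _ _ le_rfl, (hf p).1 _ _ _ le_rfl, hgq]
  · rw [(hf q).2 _ _ _ le_rfl, (hf p).2 _ _ _ le_rfl, hhq]

theorem mem_ZCyl_obj0 {x z : TwoSidedPath Λ} (hz : z.obj0 = x.obj0) :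
    z ∈ ZCyl Λ x.obj0 0 := by
  have h0 : (0 : Fin k → ℤ) + Λ.degZ x.obj0 = 0 := by rw [degZ_obj0, add_zero]
  exact (z.toFun_congr rfl h0 _ le_rfl).trans hz

/-- `bra x y _` models the bracket `[x,y]`, which is only defined when `x(0) = y(0)`. -/
def IsBracketMap (bra : ∀ x y : TwoSidedPath Λ, x.obj0 = y.obj0 → TwoSidedPath Λ) : Prop :=
  ∀ x y h, bra x y h ∈ Fx x ∧ bra x y h ∈ Ex y

def bracketHomeomorph {bra : ∀ x y : TwoSidedPath Λ, x.obj0 = y.obj0 → TwoSidedPath Λ}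
    (hbra : IsBracketMap bra) (x : TwoSidedPath Λ) :
    Ex x × Fx x ≃ₜ ZCyl Λ x.obj0 0 where
  toFun p := ⟨bra p.1 p.2 ((p.1.2 0 0 le_rfl le_rfl).trans (p.2.2 0 0 le_rfl le_rfl).symm),
    mem_ZCyl_obj0 (((hbra _ _ _).2 0 0 le_rfl le_rfl).trans (p.2.2 0 0 le_rfl le_rfl))⟩
  invFun z := (⟨bra z x (mem_vertex_cyl z.2), (hbra _ _ _).2⟩,
    ⟨bra x z (mem_vertex_cyl z.2).symm, (hbra _ _ _).1⟩)
  left_inv := by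
    rintro ⟨⟨y, hy⟩, ⟨w, hw⟩⟩
    refine Prod.ext (Subtype.ext (eq_of_mem_Fx_of_mem_Ex ?_ ?_))
      (Subtype.ext (eq_of_mem_Fx_of_mem_Ex ?_ ?_))
    · rw [← Fx_eq_of_mem (hbra y w _).1]; exact (hbra _ _ _).1
    · rw [Ex_eq_of_mem hy]; exact (hbra _ _ _).2
    · rw [Fx_eq_of_mem hw]; exact (hbra _ _ _).1
    · rw [← Ex_eq_of_mem (hbra y w _).2]; exact (hbra _ _ _).2
  right_inv := by
    rintro ⟨z, hz⟩
    refine Subtype.ext (eq_of_mem_Fx_of_mem_Ex ?_ ?_)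
    · rw [← Fx_eq_of_mem (hbra z x _).1]; exact (hbra _ _ _).1
    · rw [← Ex_eq_of_mem (hbra x z _).2]; exact (hbra _ _ _).2
  continuous_toFun :=
    (continuous_of_mem_Fx_of_mem_Ex (continuous_subtype_val.comp continuous_fst)
      (continuous_subtype_val.comp continuous_snd) fun _ => hbra _ _ _).subtype_mk _
  continuous_invFun :=
    ((continuous_of_mem_Fx_of_mem_Ex continuous_subtype_val continuous_const
        fun _ => hbra _ _ _).subtype_mk _).prodMk
      ((continuous_of_mem_Fx_of_mem_Ex continuous_const continuous_subtype_val
        fun _ => hbra _ _ _).subtype_mk _)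

end Bracket

theorem bracket_homeomorph_Ex_Fx_general {k : ℕ} (Λ : KGraph k)
    (bra : ∀ x y : TwoSidedPath Λ, x.obj0 = y.obj0 → TwoSidedPath Λ)
    (hbra : ∀ x y (h : x.obj0 = y.obj0),
      (∀ m n (hmn : m ≤ n), n ≤ 0 → (bra x y h).toFun m n hmn = x.toFun m n hmn) ∧
      (∀ m n (hmn : m ≤ n), 0 ≤ m → (bra x y h).toFun m n hmn = y.toFun m n hmn))
    (x : TwoSidedPath Λ) :
    ∃ φ : ↥(Ex x) × ↥(Fx x) ≃ₜ ↥(ZCyl Λ x.obj0 0),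
      (∀ (y : ↥(Ex x)) (w : ↥(Fx x)),
        (φ (y, w) : TwoSidedPath Λ) =
          bra y.1 w.1 ((y.2 0 0 le_rfl le_rfl).trans
            (w.2 0 0 le_rfl le_rfl).symm)) ∧
      (∀ z : ↥(ZCyl Λ x.obj0 0),
        ((φ.symm z).1 : TwoSidedPath Λ) = bra z.1 x (mem_vertex_cyl z.2) ∧
        ((φ.symm z).2 : TwoSidedPath Λ) = bra x z.1 (mem_vertex_cyl z.2).symm) :=
  ⟨bracketHomeomorph hbra x, fun _ _ => rfl, fun _ => ⟨rfl, rfl⟩⟩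

/-- For `x ∈ Λ^Δ` the bracket restricts to a homeomorphism
`E_x × F_x ≅ Z(x(0), 0)` with inverse `z ↦ ([z,x], [x,z])`. -/
theorem bracket_homeomorph_Ex_Fx {k : ℕ} (hk : 0 < k) (Λ : KGraph k)
    (hstar : Λ.Star)
    (bra : ∀ x y : TwoSidedPath Λ, x.obj0 = y.obj0 → TwoSidedPath Λ)
    (hbra : ∀ x y (h : x.obj0 = y.obj0),
      (∀ m n (hmn : m ≤ n), n ≤ 0 → (bra x y h).toFun m n hmn = x.toFun m n hmn) ∧
      (∀ m n (hmn : m ≤ n), 0 ≤ m → (bra x y h).toFun m n hmn = y.toFun m n hmn))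
    (x : TwoSidedPath Λ) :
    ∃ φ : ↥(Ex x) × ↥(Fx x) ≃ₜ ↥(ZCyl Λ x.obj0 0),
      (∀ (y : ↥(Ex x)) (w : ↥(Fx x)),
        (φ (y, w) : TwoSidedPath Λ) =
          bra y.1 w.1 ((y.2 0 0 le_rfl le_rfl).trans
            (w.2 0 0 le_rfl le_rfl).symm)) ∧
      (∀ z : ↥(ZCyl Λ x.obj0 0),
        ((φ.symm z).1 : TwoSidedPath Λ) = bra z.1 x (mem_vertex_cyl z.2) ∧
        ((φ.symm z).2 : TwoSidedPath Λ) = bra x z.1 (mem_vertex_cyl z.2).symm) :=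
  bracket_homeomorph_Ex_Fx_general Λ bra hbra x
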